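/- arXiv:2504.18695 — 2 statements merged into one kernel-verified Lean document; each statement's English description precedes it below -/
import Mathlib

section
/- Let p > 1 and δ > 0, and adopt the random-design and kernel assumptions below. Fix x ∈ (a,b) and (α_0, α_1) ∈ ℝ², and set S_{n} := α_0·V_{0,n} + α_1·V_{1,n}. Then E[S_n] = 0 for every n, and Var(S_n) = (α_0²·R(K) + α_1²·μ_2(K²))·f(x)·E[|ε_1|^{2p−2}] + O(h_n) as n → ∞; that is, there exist C > 0 and N such that for all n ≥ N, |Var(S_n) − (α_0²·R(K) + α_1²·μ_2(K²))·f(x)·E[|ε_1|^{2p−2}]| ≤ C·h_n. -/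
open MeasureTheory ProbabilityTheory Filter Real

/-- Convergence in distribution (weak convergence of laws) of a sequence of real
random variables to a limiting distribution `μ`, phrased via bounded continuous
test functions. -/
def TendstoInDistribution {Ω : Type*} [MeasurableSpace Ω] (P : Measure Ω)
    (V : ℕ → Ω → ℝ) (μ : Measure ℝ) : Prop :=
  ∀ g : BoundedContinuousFunction ℝ ℝ,
    Tendsto (fun n => ∫ ω, g (V n ω) ∂P) atTop (nhds (∫ t, g t ∂μ))

/-- Rescaled kernel `K_h(u) = h⁻¹ K(u/h)`. -/
noncomputable def Kh (K : ℝ → ℝ) (h u : ℝ) : ℝ := h⁻¹ * K (u / h)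

open scoped ENNReal NNReal

/-!
With `H u = (α₀ + α₁ u) K u` and `ψ t = |t|^(p-1) sign t`, the statistic is
`Sₙ = √(h/n) ∑ᵢ Kh H h (Xᵢ - x) ψ(εᵢ)`. The summands are centred and pairwise uncorrelated,
because the design is independent of the errors and `E ψ(ε) = 0`; hence
`Var Sₙ = h E[Kh H h (X - x)²] E[ψ(ε)²]`. The substitution `t = x + h u` turns
`h E[Kh H h (X - x)²]` into `∫ H(u)² f(x + h u) du`, which is `f(x) ∫ H² + O(h)` since `H²` lives on
`[-1, 1]` and `f` is Lipschitz. Finally `∫ H² = α₀² R(K) + α₁² μ₂(K²)`, the cross term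
`∫ u K(u)²` vanishing because `K` is even.
-/

lemma Real.measurable_sign : Measurable Real.sign :=
  Measurable.ite (measurableSet_lt measurable_id measurable_const) measurable_const
    (Measurable.ite (measurableSet_lt measurable_const measurable_id) measurable_const
      measurable_const)

noncomputable def signedRpow (q t : ℝ) : ℝ := |t| ^ q * Real.sign t

lemma measurable_signedRpow (q : ℝ) : Measurable (signedRpow q) :=
  (measurable_abs.pow_const q).mul Real.measurable_sign

lemma signedRpow_sq {q : ℝ} (hq : q ≠ 0) (t : ℝ) : signedRpow q t ^ 2 = |t| ^ (2 * q) := by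
  rcases eq_or_ne t 0 with rfl | ht
  · simp [signedRpow, Real.zero_rpow (mul_ne_zero two_ne_zero hq)]
  · have hsign : Real.sign t ^ 2 = 1 := by
      rcases Real.sign_apply_eq_of_ne_zero t ht with h | h <;> simp [h]
    rw [signedRpow, mul_pow, hsign, mul_one, ← Real.rpow_natCast, ← Real.rpow_mul (abs_nonneg t),
      mul_comm, Nat.cast_ofNat]

lemma Real.rpow_le_one_add_rpow {x r s : ℝ} (hx : 0 ≤ x) (hr : 0 ≤ r) (hrs : r ≤ s) :
    x ^ r ≤ 1 + x ^ s := by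
  rcases le_or_gt x 1 with h | h
  · linarith [Real.rpow_le_one hx h hr, Real.rpow_nonneg hx s]
  · linarith [Real.rpow_le_rpow_of_exponent_le h.le hrs]

lemma integrable_abs_rpow_of_le {Ω : Type*} [MeasurableSpace Ω] {P : Measure Ω} [IsFiniteMeasure P]
    {Z : Ω → ℝ} {r s : ℝ} (hZ : AEStronglyMeasurable Z P) (hr : 0 ≤ r) (hrs : r ≤ s)
    (hs : Integrable (fun ω => |Z ω| ^ s) P) : Integrable (fun ω => |Z ω| ^ r) P := by
  refine ((integrable_const 1).add hs).mono' ?_ (ae_of_all _ fun ω => ?_)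
  · exact (hZ.norm.aemeasurable.pow_const r).aestronglyMeasurable
  · rw [Real.norm_eq_abs, abs_of_nonneg (by positivity)]
    exact Real.rpow_le_one_add_rpow (abs_nonneg _) hr hrs

lemma memLp_two_signedRpow {Ω : Type*} [MeasurableSpace Ω] {P : Measure Ω} [IsFiniteMeasure P]
    {Z : Ω → ℝ} {q δ : ℝ} (hZ : AEStronglyMeasurable Z P) (hq : 0 < q) (hδ : 0 ≤ δ)
    (hmom : Integrable (fun ω => |Z ω| ^ (q * (2 + δ))) P) :
    MemLp (fun ω => signedRpow q (Z ω)) 2 P := by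
  refine (memLp_two_iff_integrable_sq
    ((measurable_signedRpow q).comp_aemeasurable hZ.aemeasurable).aestronglyMeasurable).2 ?_
  simp_rw [Function.comp_apply, signedRpow_sq hq.ne']
  exact integrable_abs_rpow_of_le hZ (by positivity) (by nlinarith) hmom

section IdenticallyDistributed

variable {Ω : Type*} [MeasurableSpace Ω] {P : Measure Ω} {ε : ℕ → Ω → ℝ}
  (hε : ∀ i, Measurable (ε i)) (hident : ∀ i, P.map (ε i) = P.map (ε 0))
include hε hident

lemma identDistrib_of_map_eq (i : ℕ) : IdentDistrib (ε i) (ε 0) P P :=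
  ⟨(hε i).aemeasurable, (hε 0).aemeasurable, hident i⟩

lemma memLp_two_signedRpow_comp [IsFiniteMeasure P] {q δ : ℝ} (hq : 0 < q) (hδ : 0 ≤ δ)
    (hmom : Integrable (fun ω => |ε 0 ω| ^ (q * (2 + δ))) P) (i : ℕ) :
    MemLp (fun ω => signedRpow q (ε i ω)) 2 P :=
  ((identDistrib_of_map_eq hε hident i).comp (measurable_signedRpow q)).memLp_iff.2
    (memLp_two_signedRpow (hε 0).aestronglyMeasurable hq hδ hmom)

lemma integral_signedRpow_comp (q : ℝ) (i : ℕ) :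
    ∫ ω, signedRpow q (ε i ω) ∂P = ∫ ω, signedRpow q (ε 0 ω) ∂P :=
  ((identDistrib_of_map_eq hε hident i).comp (measurable_signedRpow q)).integral_eq

lemma integral_signedRpow_comp_sq {q : ℝ} (hq : q ≠ 0) (i : ℕ) :
    ∫ ω, signedRpow q (ε i ω) ^ 2 ∂P = ∫ ω, |ε 0 ω| ^ (2 * q) ∂P := by
  refine ((identDistrib_of_map_eq hε hident i).comp
    ((measurable_signedRpow q).pow_const 2)).integral_eq.trans ?_
  simp_rw [Function.comp_apply, signedRpow_sq hq]

end IdenticallyDistributed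

lemma integrable_of_norm_le_of_support_subset {α E : Type*} [MeasurableSpace α] {μ : Measure α}
    [NormedAddCommGroup E] {g : α → E} {s : Set α} (hs : μ s ≠ ∞)
    (hg : AEStronglyMeasurable g μ) (hsupp : Function.support g ⊆ s) {B : ℝ}
    (hB : ∀ a, ‖g a‖ ≤ B) : Integrable g μ :=
  (integrableOn_iff_integrable_of_support_subset hsupp).1
    (Measure.integrableOn_of_bounded hs hg (ae_of_all _ hB))

lemma MeasureTheory.Integrable.mul_continuous_of_support_subset {α : Type*} [MeasurableSpace α]
    [TopologicalSpace α] [OpensMeasurableSpace α] [T2Space α] {μ : Measure α} {g w : α → ℝ}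
    {s : Set α} (hs : IsCompact s) (hg : Integrable g μ) (hsupp : Function.support g ⊆ s)
    (hw : Continuous w) : Integrable (fun a => g a * w a) μ :=
  (integrableOn_iff_integrable_of_support_subset
    ((Function.support_mul_subset_left _ _).trans hsupp)).1
    (hg.integrableOn.mul_continuousOn hw.continuousOn hs)

lemma exists_abs_mul_le_of_support_subset {α : Type*} [TopologicalSpace α] {w K : α → ℝ}
    {s : Set α} (hs : IsCompact s) (hw : ContinuousOn w s) {CK : ℝ} (hK : ∀ a, |K a| ≤ CK)
    (hsupp : Function.support K ⊆ s) : ∃ B, ∀ a, |w a * K a| ≤ B := by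
  obtain ⟨Bw, hBw⟩ := hs.exists_bound_of_continuousOn hw
  refine ⟨|Bw| * CK, fun a => ?_⟩
  rcases eq_or_ne (K a) 0 with ha | ha
  · simpa [ha] using mul_nonneg (abs_nonneg Bw) ((abs_nonneg _).trans (hK a))
  · rw [abs_mul]
    exact mul_le_mul ((hBw a (hsupp ha)).trans (le_abs_self Bw)) (hK a) (abs_nonneg _)
      (abs_nonneg _)

lemma integral_mul_comp_sub_div (F H : ℝ → ℝ) (x : ℝ) {h : ℝ} (hh : 0 < h) :
    ∫ t, F t * H ((t - x) / h) = h * ∫ u, H u * F (x + h * u) := by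
  have hshift : ∀ t, F t * H ((t - x) / h) = H ((t - x) / h) * F (x + h * ((t - x) / h)) := by
    intro t
    rw [mul_div_cancel₀ _ hh.ne', add_sub_cancel, mul_comm]
  simp_rw [hshift]
  rw [integral_sub_right_eq_self (fun s => H (s / h) * F (x + h * (s / h))) x,
    Measure.integral_comp_div (fun u => H u * F (x + h * u)) h, abs_of_pos hh, smul_eq_mul]

lemma lipschitzWith_toNNReal_of_abs_deriv_le {f : ℝ → ℝ} (hf : Differentiable ℝ f) {C : ℝ}
    (hC : ∀ t, |deriv f t| ≤ C) : LipschitzWith C.toNNReal f :=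
  lipschitzWith_of_nnnorm_deriv_le hf fun t => by
    rw [← NNReal.coe_le_coe, coe_nnnorm, Real.norm_eq_abs, Real.coe_toNNReal']
    exact (hC t).trans (le_max_left _ _)

lemma abs_integral_mul_comp_sub_le_of_lipschitzWith {Q f : ℝ → ℝ} {C : ℝ≥0}
    (hf : LipschitzWith C f) (hQ : Integrable Q) (hsupp : Function.support Q ⊆ Set.Icc (-1) 1)
    (x : ℝ) {h : ℝ} (hh : 0 ≤ h) :
    |(∫ u, Q u * f (x + h * u)) - (∫ u, Q u) * f x| ≤ C * h * ∫ u, |Q u| := by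
  have hcomp : Integrable (fun u => Q u * f (x + h * u)) :=
    hQ.mul_continuous_of_support_subset isCompact_Icc hsupp
      (hf.continuous.comp (continuous_const.add (continuous_const_mul h)))
  have hpointwise : ∀ u, ‖Q u * (f (x + h * u) - f x)‖ ≤ C * h * |Q u| := by
    intro u
    rcases eq_or_ne (Q u) 0 with hu | hu
    · simp [hu]
    have hu1 : |u| ≤ 1 := abs_le.2 (hsupp hu)
    have hlip : |f (x + h * u) - f x| ≤ C * h := by
      calc |f (x + h * u) - f x| ≤ C * |x + h * u - x| := by
            simpa [Real.dist_eq] using hf.dist_le_mul (x + h * u) x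
        _ = C * (h * |u|) := by rw [add_sub_cancel_left, abs_mul, abs_of_nonneg hh]
        _ ≤ C * h := by gcongr; exact mul_le_of_le_one_right hh hu1
    rw [Real.norm_eq_abs, abs_mul, mul_comm]
    gcongr
  calc |(∫ u, Q u * f (x + h * u)) - (∫ u, Q u) * f x|
      = ‖∫ u, Q u * (f (x + h * u) - f x)‖ := by
        simp_rw [mul_sub]
        rw [integral_sub hcomp (hQ.mul_const _), integral_mul_const, Real.norm_eq_abs]
    _ ≤ ∫ u, C * h * |Q u| :=
      norm_integral_le_of_norm_le (hQ.abs.const_mul _) (ae_of_all _ hpointwise)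
    _ = C * h * ∫ u, |Q u| := integral_const_mul _ _

lemma integral_sq_affine_mul_of_even {K : ℝ → ℝ} (hK : Integrable (fun u => K u ^ 2))
    (hsupp : Function.support K ⊆ Set.Icc (-1) 1) (hK_even : ∀ u, K (-u) = K u) (α₀ α₁ : ℝ) :
    ∫ u, ((α₀ + α₁ * u) * K u) ^ 2 = α₀ ^ 2 * (∫ u, K u ^ 2) + α₁ ^ 2 * ∫ u, u ^ 2 * K u ^ 2 := by
  have hsupp2 : Function.support (fun u => K u ^ 2) ⊆ Set.Icc (-1) 1 := by
    intro u hu; exact hsupp (ne_zero_pow two_ne_zero hu)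
  have hmoment : ∀ j : ℕ, Integrable (fun u => u ^ j * K u ^ 2) := fun j => by
    simpa only [mul_comm] using
      hK.mul_continuous_of_support_subset isCompact_Icc hsupp2 (continuous_pow j)
  have hodd : ∫ u, u * K u ^ 2 = 0 := by
    have h := integral_neg_eq_self (fun u => u * K u ^ 2) volume
    simp only [hK_even, neg_mul, integral_neg] at h
    linarith
  have hexpand : ∀ u, ((α₀ + α₁ * u) * K u) ^ 2
      = α₀ ^ 2 * K u ^ 2 + 2 * α₀ * α₁ * (u ^ 1 * K u ^ 2) + α₁ ^ 2 * (u ^ 2 * K u ^ 2) :=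
    fun u => by ring
  simp_rw [hexpand]
  have h0 := hK.const_mul (α₀ ^ 2)
  have h1 := (hmoment 1).const_mul (2 * α₀ * α₁)
  have h2 := (hmoment 2).const_mul (α₁ ^ 2)
  rw [integral_add (h0.fun_add h1) h2, integral_add h0 h1, integral_const_mul,
    integral_const_mul, integral_const_mul]
  simp [hodd]

lemma abs_integral_sq_affine_mul_kernel_sub_le {K f : ℝ → ℝ} (hK_meas : Measurable K) {CK : ℝ}
    (hK_bdd : ∀ u, |K u| ≤ CK) (hsupp : Function.support K ⊆ Set.Icc (-1) 1)
    (hK_even : ∀ u, K (-u) = K u) {C : ℝ≥0} (hf : LipschitzWith C f) (α₀ α₁ x : ℝ) {h : ℝ}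
    (hh : 0 ≤ h) :
    |(∫ u, ((α₀ + α₁ * u) * K u) ^ 2 * f (x + h * u))
        - (α₀ ^ 2 * (∫ u, K u ^ 2) + α₁ ^ 2 * ∫ u, u ^ 2 * K u ^ 2) * f x|
      ≤ C * h * ∫ u, |((α₀ + α₁ * u) * K u) ^ 2| := by
  have hsupp2 : Function.support (fun u => K u ^ 2) ⊆ Set.Icc (-1) 1 :=
    fun u hu => hsupp (ne_zero_pow two_ne_zero hu)
  have hK2 : Integrable (fun u => K u ^ 2) :=
    integrable_of_norm_le_of_support_subset measure_Icc_lt_top.ne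
      (hK_meas.pow_const 2).aestronglyMeasurable hsupp2 (B := CK ^ 2) fun u => by
        rw [Real.norm_eq_abs, abs_pow]
        exact pow_le_pow_left₀ (abs_nonneg _) (hK_bdd u) 2
  have hQ : Integrable (fun u => ((α₀ + α₁ * u) * K u) ^ 2) := by
    simpa only [mul_pow, mul_comm] using
      hK2.mul_continuous_of_support_subset isCompact_Icc hsupp2 (by fun_prop : Continuous
        fun u : ℝ => (α₀ + α₁ * u) ^ 2)
  rw [← integral_sq_affine_mul_of_even hK2 hsupp hK_even]
  exact abs_integral_mul_comp_sub_le_of_lipschitzWith hf hQ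
    (fun u hu => hsupp (right_ne_zero_of_mul (ne_zero_pow two_ne_zero hu))) x hh

lemma variance_fun_sum_of_covariance_eq_zero {Ω ι : Type*} [MeasurableSpace Ω] {P : Measure Ω}
    [IsFiniteMeasure P] {Y : ι → Ω → ℝ} {s : Finset ι} (hY : ∀ i ∈ s, MemLp (Y i) 2 P)
    (hcov : ∀ i ∈ s, ∀ j ∈ s, i ≠ j → cov[Y i, Y j; P] = 0) :
    Var[fun ω => ∑ i ∈ s, Y i ω; P] = ∑ i ∈ s, Var[Y i; P] := by
  rw [variance_fun_sum' hY]
  refine Finset.sum_congr rfl fun i hi => ?_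
  rw [← covariance_self (hY i hi).aemeasurable]
  exact Finset.sum_eq_single_of_mem i hi fun j hj hji => hcov i hi j hj hji.symm

lemma integral_comp_eq_integral_density_mul {Ω : Type*} [MeasurableSpace Ω] {P : Measure Ω}
    {X : Ω → ℝ} {f : ℝ → ℝ} (hX : Measurable X) (hf : Measurable f) (hf_nonneg : ∀ t, 0 ≤ f t)
    (hmap : P.map X = volume.withDensity (fun t => ENNReal.ofReal (f t))) {G : ℝ → ℝ}
    (hG : Measurable G) : ∫ ω, G (X ω) ∂P = ∫ t, f t * G t := by
  rw [← integral_map hX.aemeasurable hG.aestronglyMeasurable, hmap]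
  change ∫ t, G t ∂volume.withDensity (fun t => ((f t).toNNReal : ℝ≥0∞)) = _
  rw [integral_withDensity_eq_integral_smul hf.real_toNNReal]
  simp_rw [NNReal.smul_def, Real.coe_toNNReal _ (hf_nonneg _), smul_eq_mul]

section DesignNoise

variable {Ω : Type*} [MeasurableSpace Ω] {P : Measure Ω} {X ε : ℕ → Ω → ℝ} {G ψ : ℝ → ℝ}
  (hX : ∀ i, Measurable (X i)) (hε : ∀ i, Measurable (ε i)) (hG : Measurable G)
  (hψ : Measurable ψ)
include hX hε hG hψ

lemma memLp_two_design_mul_noise {B : ℝ} (hG_bdd : ∀ t, |G t| ≤ B)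
    (hψ2 : ∀ i, MemLp (fun ω => ψ (ε i ω)) 2 P) (i : ℕ) :
    MemLp (fun ω => G (X i ω) * ψ (ε i ω)) 2 P :=
  (hψ2 i).of_le_mul ((hG.comp (hX i)).mul (hψ.comp (hε i))).aestronglyMeasurable
    (ae_of_all _ fun ω => by
      rw [Real.norm_eq_abs, Real.norm_eq_abs, abs_mul]
      exact mul_le_mul_of_nonneg_right (hG_bdd _) (abs_nonneg _))

variable (hXε : IndepFun (fun ω i => X i ω) (fun ω i => ε i ω) P)
include hXε

lemma integral_design_mul_noise_eq_zero (hψ_mean : ∀ i, ∫ ω, ψ (ε i ω) ∂P = 0) (i : ℕ) :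
    ∫ ω, G (X i ω) * ψ (ε i ω) ∂P = 0 := by
  have hind : IndepFun (fun ω => G (X i ω)) (fun ω => ψ (ε i ω)) P :=
    hXε.comp (hG.comp (measurable_pi_apply i)) (hψ.comp (measurable_pi_apply i))
  rw [hind.integral_fun_mul_eq_mul_integral (hG.comp (hX i)).aestronglyMeasurable
    (hψ.comp (hε i)).aestronglyMeasurable, hψ_mean i, mul_zero]

lemma integral_fun_sum_design_mul_noise_eq_zero [IsFiniteMeasure P] {B : ℝ}
    (hG_bdd : ∀ t, |G t| ≤ B) (hψ2 : ∀ i, MemLp (fun ω => ψ (ε i ω)) 2 P)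
    (hψ_mean : ∀ i, ∫ ω, ψ (ε i ω) ∂P = 0) (s : Finset ℕ) :
    ∫ ω, ∑ i ∈ s, G (X i ω) * ψ (ε i ω) ∂P = 0 := by
  rw [integral_finsetSum _ fun i _ =>
    (memLp_two_design_mul_noise hX hε hG hψ hG_bdd hψ2 i).integrable one_le_two]
  exact Finset.sum_eq_zero fun i _ => integral_design_mul_noise_eq_zero hX hε hG hψ hXε hψ_mean i

lemma integral_design_mul_noise_mul (i j : ℕ) :
    ∫ ω, (G (X i ω) * ψ (ε i ω)) * (G (X j ω) * ψ (ε j ω)) ∂P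
      = (∫ ω, G (X i ω) * G (X j ω) ∂P) * ∫ ω, ψ (ε i ω) * ψ (ε j ω) ∂P := by
  have hF : Measurable fun v : ℕ → ℝ => G (v i) * G (v j) :=
    (hG.comp (measurable_pi_apply i)).mul (hG.comp (measurable_pi_apply j))
  have hΨ : Measurable fun v : ℕ → ℝ => ψ (v i) * ψ (v j) :=
    (hψ.comp (measurable_pi_apply i)).mul (hψ.comp (measurable_pi_apply j))
  have hind : IndepFun (fun ω => G (X i ω) * G (X j ω)) (fun ω => ψ (ε i ω) * ψ (ε j ω)) P :=
    hXε.comp hF hΨ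
  rw [← hind.integral_fun_mul_eq_mul_integral
    ((hG.comp (hX i)).mul (hG.comp (hX j))).aestronglyMeasurable
    ((hψ.comp (hε i)).mul (hψ.comp (hε j))).aestronglyMeasurable]
  congr 1 with ω
  ring

lemma variance_fun_sum_design_mul_noise [IsProbabilityMeasure P]
    (hε_indep : ∀ i j, i ≠ j → IndepFun (ε i) (ε j) P)
    {B : ℝ} (hG_bdd : ∀ t, |G t| ≤ B) (hψ2 : ∀ i, MemLp (fun ω => ψ (ε i ω)) 2 P)
    (hψ_mean : ∀ i, ∫ ω, ψ (ε i ω) ∂P = 0) (s : Finset ℕ) :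
    Var[fun ω => ∑ i ∈ s, G (X i ω) * ψ (ε i ω); P]
      = ∑ i ∈ s, (∫ ω, G (X i ω) ^ 2 ∂P) * ∫ ω, ψ (ε i ω) ^ 2 ∂P := by
  have hY := memLp_two_design_mul_noise hX hε hG hψ hG_bdd hψ2
  have hmean := integral_design_mul_noise_eq_zero hX hε hG hψ hXε hψ_mean
  rw [variance_fun_sum_of_covariance_eq_zero (fun i _ => hY i)]
  · refine Finset.sum_congr rfl fun i _ => ?_
    rw [variance_of_integral_eq_zero (hY i).aemeasurable (hmean i)]
    simpa only [← sq, ← mul_pow] using integral_design_mul_noise_mul hX hε hG hψ hXε i i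
  · intro i _ j _ hij
    have hind : IndepFun (fun ω => ψ (ε i ω)) (fun ω => ψ (ε j ω)) P :=
      (hε_indep i j hij).comp hψ hψ
    have hnoise : ∫ ω, ψ (ε i ω) * ψ (ε j ω) ∂P = 0 := by
      rw [hind.integral_fun_mul_eq_mul_integral (hψ.comp (hε i)).aestronglyMeasurable
        (hψ.comp (hε j)).aestronglyMeasurable, hψ_mean i, zero_mul]
    rw [covariance_eq_sub (hY i) (hY j)]
    simp only [Pi.mul_apply]
    rw [integral_design_mul_noise_mul hX hε hG hψ hXε, hnoise, hmean i]
    ring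

end DesignNoise

lemma measurable_Kh_sub {H : ℝ → ℝ} (hH : Measurable H) (h x : ℝ) :
    Measurable fun t => Kh H h (t - x) :=
  (hH.comp ((measurable_id.sub_const x).div_const h)).const_mul h⁻¹

lemma abs_Kh_le {H : ℝ → ℝ} {B : ℝ} (hH : ∀ u, |H u| ≤ B) {h : ℝ} (hh : 0 < h) (t : ℝ) :
    |Kh H h t| ≤ h⁻¹ * B := by
  rw [Kh, abs_mul, abs_of_pos (inv_pos.2 hh)]
  exact mul_le_mul_of_nonneg_left (hH _) (inv_pos.2 hh).le

lemma integral_Kh_comp_sub_sq {Ω : Type*} [MeasurableSpace Ω] {P : Measure Ω}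
    {X : Ω → ℝ} {f : ℝ → ℝ} (hX : Measurable X) (hf : Measurable f) (hf_nonneg : ∀ t, 0 ≤ f t)
    (hmap : P.map X = volume.withDensity (fun t => ENNReal.ofReal (f t))) {H : ℝ → ℝ}
    (hH : Measurable H) (x : ℝ) {h : ℝ} (hh : 0 < h) :
    ∫ ω, Kh H h (X ω - x) ^ 2 ∂P = h⁻¹ * ∫ u, H u ^ 2 * f (x + h * u) := by
  rw [integral_comp_eq_integral_density_mul hX hf hf_nonneg hmap
    ((measurable_Kh_sub hH h x).pow_const 2)]
  have hrw : ∀ t, f t * Kh H h (t - x) ^ 2 = h⁻¹ ^ 2 * (f t * H ((t - x) / h) ^ 2) :=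
    fun t => by rw [Kh]; ring
  simp_rw [hrw]
  rw [integral_const_mul, integral_mul_comp_sub_div f (fun u => H u ^ 2) x hh]
  field_simp

lemma variance_smul_sum_Kh_mul_noise {Ω : Type*} [MeasurableSpace Ω] {P : Measure Ω}
    [IsProbabilityMeasure P] {X ε : ℕ → Ω → ℝ} {f H ψ : ℝ → ℝ}
    (hX : ∀ i, Measurable (X i)) (hε : ∀ i, Measurable (ε i))
    (hXε : IndepFun (fun ω i => X i ω) (fun ω i => ε i ω) P)
    (hε_indep : ∀ i j, i ≠ j → IndepFun (ε i) (ε j) P)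
    (hf : Measurable f) (hf_nonneg : ∀ t, 0 ≤ f t)
    (hmap : ∀ i, P.map (X i) = volume.withDensity (fun t => ENNReal.ofReal (f t)))
    (hH : Measurable H) {B : ℝ} (hH_bdd : ∀ u, |H u| ≤ B)
    (hψ : Measurable ψ) (hψ2 : ∀ i, MemLp (fun ω => ψ (ε i ω)) 2 P)
    (hψ_mean : ∀ i, ∫ ω, ψ (ε i ω) ∂P = 0) {m₂ : ℝ} (hψ_sq : ∀ i, ∫ ω, ψ (ε i ω) ^ 2 ∂P = m₂)
    (x : ℝ) {h : ℝ} (hh : 0 < h) {n : ℕ} (hn : n ≠ 0) :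
    Var[fun ω => √(h / n) * ∑ i ∈ Finset.range n, Kh H h (X i ω - x) * ψ (ε i ω); P]
      = (∫ u, H u ^ 2 * f (x + h * u)) * m₂ := by
  rw [variance_const_mul, variance_fun_sum_design_mul_noise hX hε (measurable_Kh_sub hH h x) hψ
    hXε hε_indep (fun t => abs_Kh_le hH_bdd hh (t - x)) hψ2 hψ_mean]
  simp_rw [hψ_sq, integral_Kh_comp_sub_sq (hX _) hf hf_nonneg (hmap _) hH x hh]
  rw [Finset.sum_const, Finset.card_range, nsmul_eq_mul, Real.sq_sqrt (by positivity)]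
  field_simp

theorem statement1_general
    {Ω : Type*} [MeasurableSpace Ω] (P : Measure Ω) [IsProbabilityMeasure P]
    (p δ : ℝ) (hp : 1 < p) (hδ : 0 < δ)
    (f K : ℝ → ℝ) (X ε : ℕ → Ω → ℝ) (hn : ℕ → ℝ)
    -- kernel assumptions
    (hK_meas : Measurable K) (hK_nonneg : ∀ u, 0 ≤ K u)
    (hK_bdd : ∃ C, ∀ u, K u ≤ C) (hK_symm : ∀ u, K (-u) = K u)
    (hK_supp : Function.support K ⊆ Set.Icc (-1) 1)
    -- random design: i.i.d. with density f supported on (a,b)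
    (hX_meas : ∀ i, Measurable (X i))
    (hX_dist : ∀ i, Measure.map (X i) P
      = (volume : Measure ℝ).withDensity (fun t => ENNReal.ofReal (f t)))
    (hf_nonneg : ∀ t, 0 ≤ f t)
    (hf_diff : Differentiable ℝ f)
    (hf_deriv_bdd : ∃ C, ∀ t, |deriv f t| ≤ C)
    -- errors: i.i.d., independent of the design, with the moment conditions
    (hε_meas : ∀ i, Measurable (ε i))
    (hε_ident : ∀ i, Measure.map (ε i) P = Measure.map (ε 0) P)
    (hε_indep : iIndepFun ε P)
    (hXε_indep : IndepFun (fun ω i => X i ω) (fun ω i => ε i ω) P)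
    (hε_mom1 : (∫ ω, |ε 0 ω| ^ (p - 1) * Real.sign (ε 0 ω) ∂P) = 0)
    (hε_mom2 : Integrable (fun ω => |ε 0 ω| ^ ((p - 1) * (2 + δ))) P)
    -- bandwidths
    (hh_pos : ∀ n, 0 < hn n)
    -- evaluation point and coefficients
    (x : ℝ) (α₀ α₁ : ℝ)
    -- the linear combination Sₙ = α₀·V₀ₙ + α₁·V₁ₙ
    (S : ℕ → Ω → ℝ)
    (hS : ∀ n ω, S n ω =
      α₀ * (Real.sqrt (hn n / n) *
        ∑ i ∈ Finset.range n,
          |ε i ω| ^ (p - 1) * Real.sign (ε i ω) * Kh K (hn n) (X i ω - x)) +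
      α₁ * ((hn n)⁻¹ * Real.sqrt (hn n / n) *
        ∑ i ∈ Finset.range n,
          (X i ω - x) * (|ε i ω| ^ (p - 1) * Real.sign (ε i ω)) *
            Kh K (hn n) (X i ω - x))) :
    (∀ n, (∫ ω, S n ω ∂P) = 0) ∧
    ∃ C > (0 : ℝ), ∃ N : ℕ, ∀ n ≥ N,
      |variance (S n) P -
        (α₀ ^ 2 * (∫ u, (K u) ^ 2) + α₁ ^ 2 * (∫ u, u ^ 2 * (K u) ^ 2)) *
          f x * (∫ ω, |ε 0 ω| ^ (2 * p - 2) ∂P)| ≤ C * hn n := by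
  obtain ⟨CK, hCK⟩ := hK_bdd
  obtain ⟨Cf, hCf⟩ := hf_deriv_bdd
  have hK_abs : ∀ u, |K u| ≤ CK := fun u => (abs_of_nonneg (hK_nonneg u)).trans_le (hCK u)
  set H : ℝ → ℝ := fun u => (α₀ + α₁ * u) * K u
  have hH_meas : Measurable H := by fun_prop
  obtain ⟨B, hB⟩ := exists_abs_mul_le_of_support_subset isCompact_Icc
    (by fun_prop : Continuous fun u : ℝ => α₀ + α₁ * u).continuousOn hK_abs hK_supp
  set ψ := signedRpow (p - 1)
  have hψ2 := memLp_two_signedRpow_comp hε_meas hε_ident (sub_pos.2 hp) hδ.le hε_mom2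
  have hψ_mean (i : ℕ) : ∫ ω, ψ (ε i ω) ∂P = 0 :=
    (integral_signedRpow_comp hε_meas hε_ident _ i).trans hε_mom1
  have hψ_sq (i : ℕ) : ∫ ω, ψ (ε i ω) ^ 2 ∂P = ∫ ω, |ε 0 ω| ^ (2 * p - 2) ∂P := by
    rw [integral_signedRpow_comp_sq hε_meas hε_ident (sub_pos.2 hp).ne' i, mul_sub, mul_one]
  have hS_sum (n : ℕ) : S n = fun ω => √(hn n / n) *
      ∑ i ∈ Finset.range n, Kh H (hn n) (X i ω - x) * ψ (ε i ω) := by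
    funext ω
    simp only [hS n ω, Finset.mul_sum, ← Finset.sum_add_distrib]
    refine Finset.sum_congr rfl fun i _ => ?_
    simp only [H, ψ, signedRpow, Kh]
    ring
  refine ⟨fun n => ?_, ?_⟩
  · rw [hS_sum n, integral_const_mul, integral_fun_sum_design_mul_noise_eq_zero hX_meas hε_meas
      (measurable_Kh_sub hH_meas _ x) (measurable_signedRpow _) hXε_indep
      (fun t => abs_Kh_le hB (hh_pos n) (t - x)) hψ2 hψ_mean, mul_zero]
  set m₂ := ∫ ω, |ε 0 ω| ^ (2 * p - 2) ∂P
  have hm₂ : 0 ≤ m₂ := integral_nonneg fun ω => by positivity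
  have hH2 : 0 ≤ ∫ u, |H u ^ 2| := integral_nonneg fun u => abs_nonneg _
  refine ⟨Cf.toNNReal * (∫ u, |H u ^ 2|) * m₂ + 1, by positivity, 1, fun n hn1 => ?_⟩
  rw [hS_sum n, variance_smul_sum_Kh_mul_noise hX_meas hε_meas hXε_indep
    (fun i j hij => hε_indep.indepFun hij) hf_diff.continuous.measurable hf_nonneg hX_dist
    hH_meas hB (measurable_signedRpow _) hψ2 hψ_mean hψ_sq x (hh_pos n) (by omega), ← sub_mul,
    abs_mul, abs_of_nonneg hm₂]
  have hbias := abs_integral_sq_affine_mul_kernel_sub_le hK_meas hK_abs hK_supp hK_symm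
    (lipschitzWith_toNNReal_of_abs_deriv_le hf_diff hCf) α₀ α₁ x (hh_pos n).le
  calc _ ≤ Cf.toNNReal * hn n * (∫ u, |H u ^ 2|) * m₂ := by gcongr
    _ ≤ _ := by nlinarith [hh_pos n]

/-- For fixed `(α₀, α₁)`, the linear combination
`Sₙ = α₀·V₀ₙ + α₁·V₁ₙ` has mean zero for every `n`, and its variance equals
`(α₀²·R(K) + α₁²·μ₂(K²))·f(x)·E[|ε₁|^{2p-2}] + O(hₙ)`. -/
theorem statement1
    {Ω : Type*} [MeasurableSpace Ω] (P : Measure Ω) [IsProbabilityMeasure P]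
    (p δ : ℝ) (hp : 1 < p) (hδ : 0 < δ)
    (a b : ℝ) (f K : ℝ → ℝ) (X ε : ℕ → Ω → ℝ) (hn : ℕ → ℝ)
    -- kernel assumptions
    (hK_meas : Measurable K) (hK_nonneg : ∀ u, 0 ≤ K u)
    (hK_bdd : ∃ C, ∀ u, K u ≤ C) (hK_symm : ∀ u, K (-u) = K u)
    (hK_supp : Function.support K ⊆ Set.Icc (-1) 1)
    (hK_int : (∫ u, K u) = 1)
    -- random design: i.i.d. with density f supported on (a,b)
    (hX_meas : ∀ i, Measurable (X i))
    (hX_dist : ∀ i, Measure.map (X i) P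
      = (volume : Measure ℝ).withDensity (fun t => ENNReal.ofReal (f t)))
    (hX_indep : iIndepFun X P)
    (hf_nonneg : ∀ t, 0 ≤ f t)
    (hf_supp : Function.support f ⊆ Set.Ioo a b)
    (hf_diff : Differentiable ℝ f)
    (hf_deriv_bdd : ∃ C, ∀ t, |deriv f t| ≤ C)
    -- errors: i.i.d., independent of the design, with the moment conditions
    (hε_meas : ∀ i, Measurable (ε i))
    (hε_ident : ∀ i, Measure.map (ε i) P = Measure.map (ε 0) P)
    (hε_indep : iIndepFun ε P)
    (hXε_indep : IndepFun (fun ω i => X i ω) (fun ω i => ε i ω) P)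
    (hε_mom1 : (∫ ω, |ε 0 ω| ^ (p - 1) * Real.sign (ε 0 ω) ∂P) = 0)
    (hε_mom2 : Integrable (fun ω => |ε 0 ω| ^ ((p - 1) * (2 + δ))) P)
    -- bandwidths
    (hh_pos : ∀ n, 0 < hn n)
    (hh_to0 : Tendsto hn atTop (nhds 0))
    (hnh : Tendsto (fun n : ℕ => (n : ℝ) * hn n) atTop atTop)
    -- evaluation point and coefficients
    (x : ℝ) (hx : x ∈ Set.Ioo a b) (α₀ α₁ : ℝ)
    -- the linear combination Sₙ = α₀·V₀ₙ + α₁·V₁ₙ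
    (S : ℕ → Ω → ℝ)
    (hS : ∀ n ω, S n ω =
      α₀ * (Real.sqrt (hn n / n) *
        ∑ i ∈ Finset.range n,
          |ε i ω| ^ (p - 1) * Real.sign (ε i ω) * Kh K (hn n) (X i ω - x)) +
      α₁ * ((hn n)⁻¹ * Real.sqrt (hn n / n) *
        ∑ i ∈ Finset.range n,
          (X i ω - x) * (|ε i ω| ^ (p - 1) * Real.sign (ε i ω)) *
            Kh K (hn n) (X i ω - x))) :
    (∀ n, (∫ ω, S n ω ∂P) = 0) ∧
    ∃ C > (0 : ℝ), ∃ N : ℕ, ∀ n ≥ N,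
      |variance (S n) P -
        (α₀ ^ 2 * (∫ u, (K u) ^ 2) + α₁ ^ 2 * (∫ u, u ^ 2 * (K u) ^ 2)) *
          f x * (∫ ω, |ε 0 ω| ^ (2 * p - 2) ∂P)| ≤ C * hn n :=
  statement1_general P p δ hp hδ f K X ε hn hK_meas hK_nonneg hK_bdd hK_symm hK_supp hX_meas hX_dist
    hf_nonneg hf_diff hf_deriv_bdd hε_meas hε_ident hε_indep hXε_indep hε_mom1 hε_mom2 hh_pos x α₀
    α₁ S hS
end

section
/- Let p > 1 and δ > 0, and adopt the random-design and kernel assumptions below. Fix x ∈ (a,b) and j ∈ {0,1}, and for each n and i ≤ n let a_{n,i} := h_n^{−j}·√(h_n/n)·(X_i − x)^j·|ε_i|^{p−1}·sign(ε_i)·K_{h_n}(X_i − x) denote the i-th summand of V_{j,n}. Then the Lyapunov condition of order 2 + δ holds: there exist C > 0 and N such that for all n ≥ N, Σ_{i=1}^n E[|a_{n,i}|^{2+δ}] ≤ C·(n·h_n)^{−δ/2}; in particular, since n·h_n → ∞, Σ_{i=1}^n E[|a_{n,i}|^{2+δ}] → 0 as n → ∞. -/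
open MeasureTheory ProbabilityTheory Filter Real

open Metric

lemma mul_mul_sqrt_div_div_rpow_eq {n h : ℝ} (hn : 0 < n) (hh : 0 < h) (δ : ℝ) :
    n * h * (√(h / n) / h) ^ (2 + δ) = (n * h) ^ (-(δ / 2)) := by
  have hnh : 0 < n * h := mul_pos hn hh
  have hbase : √(h / n) / h = (n * h) ^ (-(1 / 2) : ℝ) := by
    rw [rpow_neg hnh.le, ← sqrt_eq_rpow, ← sqrt_inv, ← sq_eq_sq₀ (by positivity) (by positivity),
      div_pow, sq_sqrt (by positivity), sq_sqrt (by positivity)]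
    field_simp
  rw [hbase, ← rpow_mul hnh.le, mul_comm, ← rpow_add_one hnh.ne']
  ring_nf

lemma Real.abs_sign_le_one (r : ℝ) : |Real.sign r| ≤ 1 := by
  rcases Real.sign_apply_eq r with h | h | h <;> norm_num [h]

section Kernel

variable {K : ℝ → ℝ} {CK h : ℝ}

lemma Kh_nonneg (hK_nonneg : ∀ u, 0 ≤ K u) (hh : 0 ≤ h) (u : ℝ) : 0 ≤ Kh K h u :=
  mul_nonneg (inv_nonneg.2 hh) (hK_nonneg _)

lemma Kh_le (hCK : ∀ u, K u ≤ CK) (hh : 0 ≤ h) (u : ℝ) : Kh K h u ≤ CK / h := by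
  rw [Kh, div_eq_inv_mul CK h]
  exact mul_le_mul_of_nonneg_left (hCK _) (inv_nonneg.2 hh)

lemma Kh_eq_zero_of_lt_abs (hK_supp : Function.support K ⊆ Set.Icc (-1) 1) (hh : 0 < h)
    {u : ℝ} (hu : h < |u|) : Kh K h u = 0 := by
  suffices K (u / h) = 0 by rw [Kh, this, mul_zero]
  by_contra hne
  have hle : |u / h| ≤ 1 := abs_le.2 (hK_supp (Function.mem_support.2 hne))
  rw [abs_div, abs_of_pos hh, div_le_one hh] at hle
  exact hle.not_gt hu

end Kernel

/-- The summand `a_{n,i}` of `V_{j,n}` at design point `t = X_i` and error `e = ε_i`, with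
bandwidth `h = h_n` and `s = √(h_n / n)`. -/
noncomputable def kernelSummand (K : ℝ → ℝ) (h s x p : ℝ) (j : ℕ) (t e : ℝ) : ℝ :=
  (h ^ j)⁻¹ * s * ((t - x) ^ j * (|e| ^ (p - 1) * Real.sign e) * Kh K h (t - x))

section KernelSummand

variable {K : ℝ → ℝ} {CK h s x p r : ℝ} {j : ℕ}

lemma abs_kernelSummand_le (hK_nonneg : ∀ u, 0 ≤ K u) (hCK : ∀ u, K u ≤ CK) (hh : 0 < h)
    (hs : 0 ≤ s) {t : ℝ} (ht : |t - x| ≤ h) (e : ℝ) :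
    |kernelSummand K h s x p j t e| ≤ CK * (s / h) * |e| ^ (p - 1) := by
  have hE : 0 ≤ |e| ^ (p - 1) := rpow_nonneg (abs_nonneg e) _
  have hKh := Kh_nonneg hK_nonneg hh.le (t - x)
  rw [kernelSummand, abs_mul, abs_mul, abs_mul, abs_mul, abs_mul, abs_pow, abs_of_nonneg hE,
    abs_of_nonneg hKh, abs_of_nonneg hs, abs_of_pos (inv_pos.2 (pow_pos hh j))]
  calc (h ^ j)⁻¹ * s * (|t - x| ^ j * (|e| ^ (p - 1) * |Real.sign e|) * Kh K h (t - x))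
      ≤ (h ^ j)⁻¹ * s * (h ^ j * (|e| ^ (p - 1) * 1) * (CK / h)) := by
        gcongr
        · exact Real.abs_sign_le_one e
        · exact Kh_le hCK hh.le _
    _ = CK * (s / h) * |e| ^ (p - 1) := by
        field_simp

lemma abs_kernelSummand_rpow_le (hK_nonneg : ∀ u, 0 ≤ K u) (hCK : ∀ u, K u ≤ CK)
    (hK_supp : Function.support K ⊆ Set.Icc (-1) 1) (hh : 0 < h) (hs : 0 ≤ s) (hr : 0 < r)
    (t e : ℝ) :
    |kernelSummand K h s x p j t e| ^ r ≤
      (CK * (s / h)) ^ r * ((closedBall x h).indicator 1 t * |e| ^ ((p - 1) * r)) := by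
  have hCK0 : 0 ≤ CK := (hK_nonneg 0).trans (hCK 0)
  by_cases ht : |t - x| ≤ h
  · rw [Set.indicator_of_mem (by rwa [mem_closedBall, dist_eq]), Pi.one_apply, one_mul,
      rpow_mul (abs_nonneg e), ← mul_rpow (by positivity) (rpow_nonneg (abs_nonneg e) _)]
    exact rpow_le_rpow (abs_nonneg _) (abs_kernelSummand_le hK_nonneg hCK hh hs ht e) hr.le
  · rw [kernelSummand, Kh_eq_zero_of_lt_abs hK_supp hh (not_le.1 ht), mul_zero, mul_zero,
      abs_zero, zero_rpow hr.ne']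
    exact mul_nonneg (by positivity)
      (mul_nonneg (Set.indicator_nonneg (fun _ _ => zero_le_one) t) (by positivity))

end KernelSummand

lemma withDensity_closedBall_le {f : ℝ → ℝ} {Cf : ℝ} (hf : ∀ t, f t ≤ Cf) (hCf : 0 ≤ Cf)
    (x h : ℝ) :
    volume.withDensity (fun t => ENNReal.ofReal (f t)) (closedBall x h) ≤
      ENNReal.ofReal (Cf * (2 * h)) := by
  rw [withDensity_apply _ measurableSet_closedBall, ENNReal.ofReal_mul hCf, ← volume_closedBall]
  exact (setLIntegral_mono measurable_const fun t _ => ENNReal.ofReal_le_ofReal (hf t)).trans_eq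
    (setLIntegral_const _ _)

section Moment

variable {Ω : Type*} [MeasurableSpace Ω] {P : Measure Ω} {X e : Ω → ℝ} {f : ℝ → ℝ} {Cf : ℝ}

lemma integral_indicator_closedBall_comp_le (hX : Measurable X)
    (hX_dist : P.map X = volume.withDensity (fun t => ENNReal.ofReal (f t)))
    (hf : ∀ t, f t ≤ Cf) (hCf : 0 ≤ Cf) (x : ℝ) {h : ℝ} (hh : 0 ≤ h) :
    ∫ ω, (closedBall x h).indicator 1 (X ω) ∂P ≤ Cf * (2 * h) := by
  rw [← integral_map hX.aemeasurable
      (measurable_one.indicator measurableSet_closedBall).aestronglyMeasurable,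
    hX_dist, integral_indicator_one measurableSet_closedBall, measureReal_def]
  exact ENNReal.toReal_le_of_le_ofReal (by positivity) (withDensity_closedBall_le hf hCf x h)

variable {K : ℝ → ℝ} {CK h s x p r : ℝ} {j : ℕ}

lemma integral_abs_kernelSummand_rpow_le (hK_nonneg : ∀ u, 0 ≤ K u) (hCK : ∀ u, K u ≤ CK)
    (hK_supp : Function.support K ⊆ Set.Icc (-1) 1) (hX : Measurable X) (he : Measurable e)
    (hX_dist : P.map X = volume.withDensity (fun t => ENNReal.ofReal (f t)))
    (hf : ∀ t, f t ≤ Cf) (hCf : 0 ≤ Cf) (hXe : IndepFun X e P)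
    (he_mom : Integrable (fun ω => |e ω| ^ ((p - 1) * r)) P) (hh : 0 < h) (hs : 0 ≤ s)
    (hr : 0 < r) :
    ∫ ω, |kernelSummand K h s x p j (X ω) (e ω)| ^ r ∂P ≤
      (CK * (s / h)) ^ r * (Cf * (2 * h) * ∫ ω, |e ω| ^ ((p - 1) * r) ∂P) := by
  set ψ : ℝ → ℝ := (closedBall x h).indicator 1
  have hψ : Measurable ψ := measurable_one.indicator measurableSet_closedBall
  have hφ : Measurable fun t : ℝ => |t| ^ ((p - 1) * r) := measurable_abs.pow_const _
  have hB : 0 ≤ (CK * (s / h)) ^ r :=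
    rpow_nonneg (mul_nonneg ((hK_nonneg 0).trans (hCK 0)) (by positivity)) _
  have hdom : Integrable (fun ω => (CK * (s / h)) ^ r * (ψ (X ω) * |e ω| ^ ((p - 1) * r))) P := by
    refine (he_mom.bdd_mul (c := 1) (hψ.comp hX).aestronglyMeasurable
      (ae_of_all _ fun ω => ?_)).const_mul _
    exact (norm_indicator_le_norm_self _ _).trans (by simp)
  calc ∫ ω, |kernelSummand K h s x p j (X ω) (e ω)| ^ r ∂P
      ≤ ∫ ω, (CK * (s / h)) ^ r * (ψ (X ω) * |e ω| ^ ((p - 1) * r)) ∂P :=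
        integral_mono_of_nonneg (ae_of_all _ fun ω => by positivity) hdom
          (ae_of_all _ fun ω => abs_kernelSummand_rpow_le hK_nonneg hCK hK_supp hh hs hr _ _)
    _ = (CK * (s / h)) ^ r * ((∫ ω, ψ (X ω) ∂P) * ∫ ω, |e ω| ^ ((p - 1) * r) ∂P) := by
        rw [integral_const_mul]
        exact congrArg _ ((hXe.comp hψ hφ).integral_fun_mul_eq_mul_integral
          (hψ.comp hX).aestronglyMeasurable (hφ.comp he).aestronglyMeasurable)
    _ ≤ (CK * (s / h)) ^ r * (Cf * (2 * h) * ∫ ω, |e ω| ^ ((p - 1) * r) ∂P) := by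
        gcongr
        exact integral_indicator_closedBall_comp_le hX hX_dist hf hCf x hh.le

lemma sum_integral_abs_kernelSummand_rpow_le {X ε : ℕ → Ω → ℝ} {M δ : ℝ}
    (hK_nonneg : ∀ u, 0 ≤ K u) (hCK : ∀ u, K u ≤ CK)
    (hK_supp : Function.support K ⊆ Set.Icc (-1) 1) (hX : ∀ i, Measurable (X i))
    (hε : ∀ i, Measurable (ε i))
    (hX_dist : ∀ i, P.map (X i) = volume.withDensity (fun t => ENNReal.ofReal (f t)))
    (hf : ∀ t, f t ≤ Cf) (hCf : 0 ≤ Cf) (hXε : ∀ i, IndepFun (X i) (ε i) P)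
    (hε_mom : ∀ i, Integrable (fun ω => |ε i ω| ^ ((p - 1) * (2 + δ))) P)
    (hM : ∀ i, ∫ ω, |ε i ω| ^ ((p - 1) * (2 + δ)) ∂P = M) (hδ : 0 < δ) {n : ℕ} (hn : 0 < n)
    (hh : 0 < h) :
    ∑ i ∈ Finset.range n, ∫ ω, |kernelSummand K h √(h / n) x p j (X i ω) (ε i ω)| ^ (2 + δ) ∂P ≤
      2 * CK ^ (2 + δ) * Cf * M * ((n : ℝ) * h) ^ (-(δ / 2)) := by
  have hCK0 : 0 ≤ CK := (hK_nonneg 0).trans (hCK 0)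
  calc ∑ i ∈ Finset.range n, ∫ ω, |kernelSummand K h √(h / n) x p j (X i ω) (ε i ω)| ^ (2 + δ) ∂P
      ≤ ∑ _i ∈ Finset.range n, (CK * (√(h / n) / h)) ^ (2 + δ) * (Cf * (2 * h) * M) :=
        Finset.sum_le_sum fun i _ => hM i ▸ integral_abs_kernelSummand_rpow_le hK_nonneg hCK
          hK_supp (hX i) (hε i) (hX_dist i) hf hCf (hXε i) (hε_mom i) hh (sqrt_nonneg _)
          (by linarith)
    _ = 2 * CK ^ (2 + δ) * Cf * M * (n * h * (√(h / n) / h) ^ (2 + δ)) := by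
        rw [Finset.sum_const, Finset.card_range, nsmul_eq_mul, mul_rpow hCK0 (by positivity)]
        ring
    _ = 2 * CK ^ (2 + δ) * Cf * M * ((n : ℝ) * h) ^ (-(δ / 2)) := by
        rw [mul_mul_sqrt_div_div_rpow_eq (Nat.cast_pos.2 hn) hh]

end Moment

theorem statement16_general
    {Ω : Type*} [MeasurableSpace Ω] (P : Measure Ω)
    (p δ : ℝ) (hδ : 0 < δ)
    (a b : ℝ) (f K : ℝ → ℝ) (X ε : ℕ → Ω → ℝ) (hn : ℕ → ℝ)
    -- kernel assumptions
    (hK_nonneg : ∀ u, 0 ≤ K u)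
    (hK_bdd : ∃ C, ∀ u, K u ≤ C)
    (hK_supp : Function.support K ⊆ Set.Icc (-1) 1)
    -- random design: i.i.d. with density f supported on (a,b)
    (hX_meas : ∀ i, Measurable (X i))
    (hX_dist : ∀ i, Measure.map (X i) P
      = (volume : Measure ℝ).withDensity (fun t => ENNReal.ofReal (f t)))
    (hf_supp : Function.support f ⊆ Set.Ioo a b)
    (hf_diff : Differentiable ℝ f)
    -- errors: i.i.d., independent of the design, with the moment conditions
    (hε_meas : ∀ i, Measurable (ε i))
    (hε_ident : ∀ i, Measure.map (ε i) P = Measure.map (ε 0) P)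
    (hXε_indep : IndepFun (fun ω i => X i ω) (fun ω i => ε i ω) P)
    (hε_mom2 : Integrable (fun ω => |ε 0 ω| ^ ((p - 1) * (2 + δ))) P)
    -- bandwidths
    (hh_pos : ∀ n, 0 < hn n)
    (hnh : Tendsto (fun n : ℕ => (n : ℝ) * hn n) atTop atTop)
    -- evaluation point and exponent j ∈ {0, 1}
    (x : ℝ) (j : ℕ)
    -- the summands of V_{j,n}
    (A : ℕ → ℕ → Ω → ℝ)
    (hA : ∀ n i ω, A n i ω =
      ((hn n) ^ j)⁻¹ * Real.sqrt (hn n / n) *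
        ((X i ω - x) ^ j * (|ε i ω| ^ (p - 1) * Real.sign (ε i ω)) *
          Kh K (hn n) (X i ω - x))) :
    (∃ C > (0 : ℝ), ∃ N : ℕ, ∀ n ≥ N,
      (∑ i ∈ Finset.range n, ∫ ω, |A n i ω| ^ (2 + δ) ∂P) ≤
        C * ((n : ℝ) * hn n) ^ (-(δ / 2))) ∧
    Tendsto (fun n => ∑ i ∈ Finset.range n, ∫ ω, |A n i ω| ^ (2 + δ) ∂P)
      atTop (nhds 0) := by
  obtain ⟨CK, hCK⟩ := hK_bdd
  obtain ⟨Cf, hCf⟩ := hf_diff.continuous.bounded_above_of_compact_support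
    (HasCompactSupport.of_support_subset_isCompact isCompact_Icc
      (hf_supp.trans Set.Ioo_subset_Icc_self))
  set q := (p - 1) * (2 + δ)
  have hε_id : ∀ i, IdentDistrib (fun ω => |ε i ω| ^ q) (fun ω => |ε 0 ω| ^ q) P P := fun i =>
    (IdentDistrib.mk (hε_meas i).aemeasurable (hε_meas 0).aemeasurable (hε_ident i)).comp
      (measurable_abs.pow_const q)
  set C₀ := 2 * CK ^ (2 + δ) * Cf * ∫ ω, |ε 0 ω| ^ q ∂P
  have hsum : ∀ n ≥ 1, ∑ i ∈ Finset.range n, ∫ ω, |A n i ω| ^ (2 + δ) ∂P ≤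
      C₀ * ((n : ℝ) * hn n) ^ (-(δ / 2)) := fun n hn1 => by
    have hA' : ∀ i ω, A n i ω = kernelSummand K (hn n) √(hn n / n) x p j (X i ω) (ε i ω) :=
      hA n
    simp only [hA']
    exact sum_integral_abs_kernelSummand_rpow_le hK_nonneg hCK hK_supp hX_meas hε_meas hX_dist
      (fun t => (le_norm_self _).trans (hCf t)) ((norm_nonneg _).trans (hCf 0))
      (fun i => hXε_indep.comp (measurable_pi_apply i) (measurable_pi_apply i))
      (fun i => (hε_id i).integrable_iff.2 hε_mom2) (fun i => (hε_id i).integral_eq) hδ hn1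
      (hh_pos n)
  refine ⟨⟨max C₀ 1, lt_max_of_lt_right one_pos, 1, fun n hn1 => (hsum n hn1).trans
    (mul_le_mul_of_nonneg_right (le_max_left _ _)
      (rpow_nonneg (mul_nonneg n.cast_nonneg (hh_pos n).le) _))⟩, ?_⟩
  refine squeeze_zero' (Eventually.of_forall fun n => ?_) (eventually_atTop.2 ⟨1, hsum⟩) ?_
  · exact Finset.sum_nonneg fun i _ => integral_nonneg fun ω => by positivity
  · simpa using ((tendsto_rpow_neg_atTop (half_pos hδ)).comp hnh).const_mul C₀

/-- The Lyapunov condition of order `2 + δ` holds for the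
triangular array of summands `a_{n,i}` of `V_{j,n}`:
`Σ_{i<n} E[|a_{n,i}|^{2+δ}] ≤ C·(n·hₙ)^{−δ/2}` for large `n`, and in particular
this sum tends to `0`. -/
theorem statement16
    {Ω : Type*} [MeasurableSpace Ω] (P : Measure Ω) [IsProbabilityMeasure P]
    (p δ : ℝ) (hp : 1 < p) (hδ : 0 < δ)
    (a b : ℝ) (f K : ℝ → ℝ) (X ε : ℕ → Ω → ℝ) (hn : ℕ → ℝ)
    -- kernel assumptions
    (hK_meas : Measurable K) (hK_nonneg : ∀ u, 0 ≤ K u)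
    (hK_bdd : ∃ C, ∀ u, K u ≤ C) (hK_symm : ∀ u, K (-u) = K u)
    (hK_supp : Function.support K ⊆ Set.Icc (-1) 1)
    (hK_int : (∫ u, K u) = 1)
    -- random design: i.i.d. with density f supported on (a,b)
    (hX_meas : ∀ i, Measurable (X i))
    (hX_dist : ∀ i, Measure.map (X i) P
      = (volume : Measure ℝ).withDensity (fun t => ENNReal.ofReal (f t)))
    (hX_indep : iIndepFun X P)
    (hf_nonneg : ∀ t, 0 ≤ f t)
    (hf_supp : Function.support f ⊆ Set.Ioo a b)
    (hf_diff : Differentiable ℝ f)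
    (hf_deriv_bdd : ∃ C, ∀ t, |deriv f t| ≤ C)
    -- errors: i.i.d., independent of the design, with the moment conditions
    (hε_meas : ∀ i, Measurable (ε i))
    (hε_ident : ∀ i, Measure.map (ε i) P = Measure.map (ε 0) P)
    (hε_indep : iIndepFun ε P)
    (hXε_indep : IndepFun (fun ω i => X i ω) (fun ω i => ε i ω) P)
    (hε_mom1 : (∫ ω, |ε 0 ω| ^ (p - 1) * Real.sign (ε 0 ω) ∂P) = 0)
    (hε_mom2 : Integrable (fun ω => |ε 0 ω| ^ ((p - 1) * (2 + δ))) P)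
    -- bandwidths
    (hh_pos : ∀ n, 0 < hn n)
    (hh_to0 : Tendsto hn atTop (nhds 0))
    (hnh : Tendsto (fun n : ℕ => (n : ℝ) * hn n) atTop atTop)
    -- evaluation point and exponent j ∈ {0, 1}
    (x : ℝ) (hx : x ∈ Set.Ioo a b) (j : ℕ) (hj : j ≤ 1)
    -- the summands of V_{j,n}
    (A : ℕ → ℕ → Ω → ℝ)
    (hA : ∀ n i ω, A n i ω =
      ((hn n) ^ j)⁻¹ * Real.sqrt (hn n / n) *
        ((X i ω - x) ^ j * (|ε i ω| ^ (p - 1) * Real.sign (ε i ω)) *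
          Kh K (hn n) (X i ω - x))) :
    (∃ C > (0 : ℝ), ∃ N : ℕ, ∀ n ≥ N,
      (∑ i ∈ Finset.range n, ∫ ω, |A n i ω| ^ (2 + δ) ∂P) ≤
        C * ((n : ℝ) * hn n) ^ (-(δ / 2))) ∧
    Tendsto (fun n => ∑ i ∈ Finset.range n, ∫ ω, |A n i ω| ^ (2 + δ) ∂P)
      atTop (nhds 0) :=
  statement16_general P p δ hδ a b f K X ε hn hK_nonneg hK_bdd hK_supp hX_meas hX_dist hf_supp
    hf_diff hε_meas hε_ident hXε_indep hε_mom2 hh_pos hnh x j A hA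
end
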